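/- arXiv:1807.02767 — 2 statements merged into one kernel-verified Lean document; each statement's English description precedes it below -/
import Mathlib

section
/- If (V, ν) and (W, μ) are Šerstnev PN-spaces under τ_M, then the map θ : V × W → Δ⁺ defined by θ_{(x,y)} = τ_M(ν_x, μ_y) makes (V × W, θ) a Šerstnev PN-space under τ_M, and the associated quantile seminorms satisfy ‖(x,y)‖_w = ‖x‖_{V,w} + ‖y‖_{W,w} for all w ∈ (0,1). -/
open Filter Topology Set

noncomputable section

/-- A distance distribution function: nondecreasing, with values in `[0,1]`,
left-continuous, `F 0 = 0` and `sup F = 1`. -/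
def IsDDF (F : ℝ → ℝ) : Prop :=
  Monotone F ∧ (∀ t, F t ∈ Set.Icc (0:ℝ) 1) ∧
  (∀ t : ℝ, Tendsto F (nhdsWithin t (Set.Iio t)) (nhds (F t))) ∧
  F 0 = 0 ∧ (⨆ t, F t) = 1

/-- A proper d.f.: `F t → 1` as `t → ∞`. -/
def IsProper (F : ℝ → ℝ) : Prop := Tendsto F atTop (nhds 1)

/-- The unit step function at `0`. -/
def H0 : ℝ → ℝ := fun t => if 0 < t then 1 else 0

/-- The quantile function `F̂(w) = sup {t | F t < w}`, valued in `EReal`. -/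
noncomputable def qhat (F : ℝ → ℝ) (w : ℝ) : EReal :=
  sSup ((fun t : ℝ => (t : EReal)) '' {t | F t < w})

/-- The triangle function `τ_M(F,G)(x) = sup_{s+t=x} min (F s) (G t)`. -/
noncomputable def tauM (F G : ℝ → ℝ) : ℝ → ℝ :=
  fun x => ⨆ s : ℝ, min (F s) (G (x - s))

/-- A Šerstnev probabilistic normed space under `τ_M`, with all `ν_x` proper. -/
structure SPN (V : Type*) [AddCommGroup V] [Module ℝ V] where
  nu : V → ℝ → ℝ
  ddf : ∀ x, IsDDF (nu x)
  proper : ∀ x, IsProper (nu x)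
  nu_eq_iff : ∀ x, nu x = H0 ↔ x = 0
  nu_add : ∀ x y t, tauM (nu x) (nu y) t ≤ nu (x + y) t
  nu_smul : ∀ a : ℝ, a ≠ 0 → ∀ x t, nu (a • x) t = nu x (t / |a|)

/-- The quantile seminorm `‖x‖_w = sup {t | ν_x t < w}`. -/
noncomputable def pnorm {V : Type*} [AddCommGroup V] [Module ℝ V]
    (S : SPN V) (x : V) (w : ℝ) : ℝ :=
  sSup {t | S.nu x t < w}

/-- The strong topology of a PN-space, generated by the balls of the seminorms `‖·‖_w`. -/
def strongTop {V : Type*} [AddCommGroup V] [Module ℝ V] (S : SPN V) : TopologicalSpace V :=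
  TopologicalSpace.generateFrom
    {U | ∃ (x : V) (w r : ℝ), w ∈ Set.Ioo (0:ℝ) 1 ∧ 0 < r ∧
      U = {y | pnorm S (y - x) w < r}}

/-- A strong Cauchy sequence. -/
def StrongCauchy {V : Type*} [AddCommGroup V] [Module ℝ V] (S : SPN V) (x : ℕ → V) : Prop :=
  ∀ t : ℝ, 0 < t → ∃ N, ∀ m ≥ N, ∀ n ≥ N, 1 - t < S.nu (x n - x m) t

/-- Strong convergence of a sequence to a point. -/
def StrongLim {V : Type*} [AddCommGroup V] [Module ℝ V] (S : SPN V) (x : ℕ → V) (p : V) : Prop :=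
  ∀ t : ℝ, 0 < t → ∃ N, ∀ n ≥ N, 1 - t < S.nu (x n - p) t

/-- Strong completeness: every strong Cauchy sequence strongly converges. -/
def StrongComplete {V : Type*} [AddCommGroup V] [Module ℝ V] (S : SPN V) : Prop :=
  ∀ x : ℕ → V, StrongCauchy S x → ∃ p, StrongLim S x p

/-! τ_M is commutative, has `H0` as unit, commutes with rescaling `t ↦ t / c`, and satisfies the
exchange inequality `τ_M(τ_M(F,G), τ_M(F',G')) ≤ τ_M(τ_M(F,F'), τ_M(G,G'))`; so the Šerstnev
axioms for `θ` follow componentwise from those of `ν` and `μ`. For the seminorms, the value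
`τ_M(F,G)(s + u)` lies between `min (F s) (G u)` and `max (F s) (G u)`: hence `τ_M(F,G) < w`
strictly before `‖x‖_w + ‖y‖_w` and `τ_M(F,G) ≥ w` strictly after it. -/

theorem Monotone.tendsto_nhdsLT_of_exists_lt {f : ℝ → ℝ} (hf : Monotone f) {t : ℝ}
    (h : ∀ y < f t, ∃ u < t, y < f u) : Tendsto f (𝓝[<] t) (𝓝 (f t)) := by
  refine tendsto_order.2 ⟨fun y hy => ?_, fun y hy => ?_⟩
  · obtain ⟨u, hut, hyu⟩ := h y hy
    filter_upwards [Ioo_mem_nhdsLT hut] with v hv using hyu.trans_le (hf hv.1.le)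
  · filter_upwards [self_mem_nhdsWithin] with v hv using (hf (le_of_lt hv)).trans_lt hy

theorem csSup_eq_of_Iio_subset_of_subset_Iic {α : Type*} [ConditionallyCompleteLinearOrder α]
    [DenselyOrdered α] [NoMinOrder α] {s : Set α} {c : α} (hc : Iio c ⊆ s) (hs : s ⊆ Iic c) :
    sSup s = c := by
  refine le_antisymm (csSup_le ?_ hs) ?_
  · obtain ⟨b, hb⟩ := exists_lt c
    exact ⟨b, hc hb⟩
  · calc c = sSup (Iio c) := csSup_Iio.symm
      _ ≤ sSup s := csSup_le_csSup ⟨c, hs⟩ nonempty_Iio hc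

namespace IsDDF

variable {F : ℝ → ℝ}

theorem monotone (hF : IsDDF F) : Monotone F := hF.1

theorem nonneg (hF : IsDDF F) (t : ℝ) : 0 ≤ F t := (hF.2.1 t).1

theorem le_one (hF : IsDDF F) (t : ℝ) : F t ≤ 1 := (hF.2.1 t).2

theorem eq_zero_of_nonpos (hF : IsDDF F) {t : ℝ} (ht : t ≤ 0) : F t = 0 :=
  le_antisymm (hF.2.2.2.1 ▸ hF.monotone ht) (hF.nonneg t)

theorem exists_lt_of_lt (hF : IsDDF F) {t y : ℝ} (hy : y < F t) : ∃ u < t, y < F u := by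
  obtain ⟨u, hyu, hut⟩ := (((hF.2.2.1 t).eventually (lt_mem_nhds hy)).and
    self_mem_nhdsWithin).exists
  exact ⟨u, hut, hyu⟩

theorem bddAbove_range (hF : IsDDF F) : BddAbove (range F) :=
  ⟨1, by rintro _ ⟨t, rfl⟩; exact hF.le_one t⟩

theorem exists_lt_apply (hF : IsDDF F) {y : ℝ} (hy : y < 1) : ∃ t, y < F t :=
  exists_lt_of_lt_ciSup (hF.2.2.2.2 ▸ hy)

theorem isProper (hF : IsDDF F) : IsProper F := by
  have h := tendsto_atTop_ciSup hF.monotone hF.bddAbove_range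
  rwa [hF.2.2.2.2] at h

theorem eq_H0_of_H0_le (hF : IsDDF F) (h : ∀ t, H0 t ≤ F t) : F = H0 := by
  funext t
  by_cases ht : 0 < t
  · have h1 := h t
    simp only [H0, if_pos ht] at h1 ⊢
    exact le_antisymm (hF.le_one t) h1
  · simp only [H0, if_neg ht]
    exact hF.eq_zero_of_nonpos (not_lt.1 ht)

end IsDDF

theorem isDDF_H0 : IsDDF H0 := by
  have hmono : Monotone H0 := fun a b hab => by
    unfold H0; split_ifs with ha hb <;> norm_num
    exact hb (ha.trans_le hab)
  have hle : ∀ t, H0 t ≤ 1 := fun t => by unfold H0; split_ifs <;> norm_num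
  have hone : H0 1 = 1 := if_pos one_pos
  refine ⟨hmono, fun t => ⟨by unfold H0; split_ifs <;> norm_num, hle t⟩,
    fun t => hmono.tendsto_nhdsLT_of_exists_lt fun y hy => ?_, if_neg (lt_irrefl 0),
    ciSup_eq_of_forall_le_of_forall_lt_exists_gt hle fun y hy => ⟨1, by rwa [hone]⟩⟩
  by_cases ht : 0 < t
  · exact ⟨t / 2, by linarith, by simpa [H0, ht] using hy⟩
  · exact ⟨t - 1, by linarith, by simpa [H0, ht, show ¬ 0 < t - 1 by linarith] using hy⟩

section tauM

variable {F G F' G' : ℝ → ℝ}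

theorem min_le_tauM (hF : ∀ s, F s ≤ 1) {s u t : ℝ} (hsut : s + u = t) :
    min (F s) (G u) ≤ tauM F G t := by
  subst hsut
  have hbdd : BddAbove (range fun r => min (F r) (G (s + u - r))) :=
    ⟨1, by rintro _ ⟨r, rfl⟩; exact (min_le_left _ _).trans (hF r)⟩
  have h := le_ciSup hbdd s
  rwa [add_sub_cancel_left] at h

theorem tauM_le_one (hF : ∀ s, F s ≤ 1) (t : ℝ) : tauM F G t ≤ 1 :=
  ciSup_le fun s => (min_le_left _ _).trans (hF s)

theorem exists_lt_min_of_lt_tauM {y t : ℝ} (hy : y < tauM F G t) :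
    ∃ s u, s + u = t ∧ y < min (F s) (G u) := by
  obtain ⟨s, hs⟩ := exists_lt_of_lt_ciSup hy
  exact ⟨s, t - s, by ring, hs⟩

theorem tauM_comm : tauM F G = tauM G F := by
  funext t
  rw [tauM, tauM, ← (Equiv.subLeft t).iSup_comp]
  simp [min_comm]

theorem tauM_le_tauM (hF' : ∀ s, F' s ≤ 1) (hF : F ≤ F') (hG : G ≤ G') (t : ℝ) :
    tauM F G t ≤ tauM F' G' t :=
  ciSup_le fun s => (min_le_min (hF s) (hG _)).trans (min_le_tauM hF' (by ring))

theorem tauM_monotone (hF : ∀ s, F s ≤ 1) (hG : Monotone G) : Monotone (tauM F G) :=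
  fun a b hab => ciSup_le fun s =>
    (min_le_min le_rfl (hG (by linarith))).trans (min_le_tauM hF (add_sub_cancel s b))

theorem tauM_le_left (hF : IsDDF F) (hG : IsDDF G) (t : ℝ) : tauM F G t ≤ F t := by
  refine ciSup_le fun s => ?_
  rcases le_or_gt t s with hts | hst
  · rw [hG.eq_zero_of_nonpos (by linarith)]
    exact (min_le_right _ _).trans (hF.nonneg t)
  · exact (min_le_left _ _).trans (hF.monotone hst.le)

theorem tauM_add_le_max (hF : Monotone F) (hG : Monotone G) (s u : ℝ) :
    tauM F G (s + u) ≤ max (F s) (G u) := by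
  refine ciSup_le fun r => ?_
  rcases le_or_gt r s with hrs | hsr
  · exact (min_le_left _ _).trans ((hF hrs).trans (le_max_left _ _))
  · exact (min_le_right _ _).trans ((hG (by linarith)).trans (le_max_right _ _))

theorem tauM_H0_right (hF : IsDDF F) : tauM F H0 = F := by
  funext t
  refine le_antisymm (tauM_le_left hF isDDF_H0 t) (le_of_forall_lt fun y hy => ?_)
  obtain ⟨u, hut, hyu⟩ := hF.exists_lt_of_lt hy
  have hH0 : H0 (t - u) = 1 := if_pos (sub_pos.2 hut)
  calc y < min (F u) (H0 (t - u)) := by rwa [hH0, min_eq_left (hF.le_one u)]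
    _ ≤ tauM F H0 t := min_le_tauM hF.le_one (by ring)

theorem tauM_isDDF (hF : IsDDF F) (hG : IsDDF G) : IsDDF (tauM F G) := by
  have hmono := tauM_monotone hF.le_one hG.monotone
  have hnonneg (t : ℝ) : 0 ≤ tauM F G t :=
    (le_min (hF.nonneg 0) (hG.nonneg t)).trans (min_le_tauM hF.le_one (zero_add t))
  refine ⟨hmono, fun t => ⟨hnonneg t, tauM_le_one hF.le_one t⟩, fun t => ?_, ?_, ?_⟩
  · refine hmono.tendsto_nhdsLT_of_exists_lt fun y hy => ?_
    obtain ⟨s, u, rfl, hsu⟩ := exists_lt_min_of_lt_tauM hy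
    obtain ⟨v, hvu, hyv⟩ := hG.exists_lt_of_lt (lt_min_iff.1 hsu).2
    exact ⟨s + v, by linarith, (lt_min (lt_min_iff.1 hsu).1 hyv).trans_le
      (min_le_tauM hF.le_one rfl)⟩
  · exact le_antisymm ((tauM_le_left hF hG 0).trans_eq hF.2.2.2.1) (hnonneg 0)
  · refine ciSup_eq_of_forall_le_of_forall_lt_exists_gt (tauM_le_one hF.le_one) fun y hy => ?_
    obtain ⟨s, hs⟩ := hF.exists_lt_apply hy
    obtain ⟨u, hu⟩ := hG.exists_lt_apply hy
    exact ⟨s + u, (lt_min hs hu).trans_le (min_le_tauM hF.le_one rfl)⟩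

theorem tauM_eq_H0_iff (hF : IsDDF F) (hG : IsDDF G) :
    tauM F G = H0 ↔ F = H0 ∧ G = H0 := by
  refine ⟨fun h => ⟨hF.eq_H0_of_H0_le fun t => ?_, hG.eq_H0_of_H0_le fun t => ?_⟩, ?_⟩
  · exact h ▸ tauM_le_left hF hG t
  · rw [← h, tauM_comm]
    exact tauM_le_left hG hF t
  · rintro ⟨rfl, rfl⟩
    exact tauM_H0_right isDDF_H0

theorem tauM_comp_div {c : ℝ} (hc : 0 < c) (t : ℝ) :
    tauM (fun s => F (s / c)) (fun s => G (s / c)) t = tauM F G (t / c) := by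
  rw [tauM, tauM, ← (Equiv.mulLeft₀ c hc.ne').iSup_comp]
  congr! 3 with s
  · simp [hc.ne']
  · simp only [Equiv.mulLeft₀_apply]
    field_simp

theorem tauM_tauM_le_tauM_tauM (hF : ∀ s, F s ≤ 1) (hG : ∀ s, G s ≤ 1) (t : ℝ) :
    tauM (tauM F G) (tauM F' G') t ≤ tauM (tauM F F') (tauM G G') t := by
  refine ciSup_le fun s => le_of_forall_lt fun y hy => ?_
  obtain ⟨a, b, hab, hFG⟩ := exists_lt_min_of_lt_tauM (lt_min_iff.1 hy).1
  obtain ⟨a', b', hab', hFG'⟩ := exists_lt_min_of_lt_tauM (lt_min_iff.1 hy).2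
  calc y < min (min (F a) (F' a')) (min (G b) (G' b')) := by
        simp only [lt_min_iff] at hFG hFG' ⊢
        tauto
    _ ≤ min (tauM F F' (a + a')) (tauM G G' (b + b')) :=
        min_le_min (min_le_tauM hF rfl) (min_le_tauM hG rfl)
    _ ≤ tauM (tauM F F') (tauM G G') t := min_le_tauM (tauM_le_one hF) (by linarith)

end tauM

section Quantile

variable {F G : ℝ → ℝ} {w : ℝ}

theorem IsDDF.lt_of_lt_sSup (hF : IsDDF F) (hw : 0 < w) {t : ℝ}
    (ht : t < sSup {t | F t < w}) : F t < w := by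
  have hzero : (0 : ℝ) ∈ {t | F t < w} := by
    simpa only [mem_ofPred_eq, hF.2.2.2.1] using hw
  obtain ⟨t', ht'w, htt'⟩ := exists_lt_of_lt_csSup ⟨0, hzero⟩ ht
  exact (hF.monotone htt'.le).trans_lt ht'w

theorem IsDDF.le_of_sSup_lt (hF : IsDDF F) (hw : w < 1) {t : ℝ}
    (ht : sSup {t | F t < w} < t) : w ≤ F t := by
  obtain ⟨N, hN⟩ := (hF.isProper.eventually (lt_mem_nhds hw)).exists_forall_of_atTop
  have hbdd : BddAbove {t | F t < w} :=
    ⟨N, fun s hs => le_of_not_gt fun hNs => (hN s hNs.le).not_gt hs⟩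
  exact le_of_not_gt fun htw => ht.not_ge (le_csSup hbdd htw)

theorem sSup_tauM_lt (hF : IsDDF F) (hG : IsDDF G) (hw0 : 0 < w) (hw1 : w < 1) :
    sSup {t | tauM F G t < w} = sSup {t | F t < w} + sSup {t | G t < w} := by
  set a := sSup {t | F t < w}
  set b := sSup {t | G t < w}
  refine csSup_eq_of_Iio_subset_of_subset_Iic (fun t ht => ?_) (fun t ht => ?_)
  · obtain ⟨δ, hδ, rfl⟩ : ∃ δ > 0, t = (a - δ) + (b - δ) :=
      ⟨(a + b - t) / 2, by linarith [mem_Iio.1 ht], by ring⟩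
    exact (tauM_add_le_max hF.monotone hG.monotone _ _).trans_lt
      (max_lt (hF.lt_of_lt_sSup hw0 (by linarith)) (hG.lt_of_lt_sSup hw0 (by linarith)))
  · refine mem_Iic.2 (le_of_not_gt fun hab => (show tauM F G t < w from ht).not_ge ?_)
    obtain ⟨δ, hδ, rfl⟩ : ∃ δ > 0, t = (a + δ) + (b + δ) :=
      ⟨(t - (a + b)) / 2, by linarith, by ring⟩
    exact (le_min (hF.le_of_sSup_lt hw1 (by linarith)) (hG.le_of_sSup_lt hw1 (by linarith))).trans
      (min_le_tauM hF.le_one rfl)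

end Quantile

namespace SPN

variable {V W : Type*} [AddCommGroup V] [Module ℝ V] [AddCommGroup W] [Module ℝ W]

def prod (S : SPN V) (S' : SPN W) : SPN (V × W) where
  nu p := tauM (S.nu p.1) (S'.nu p.2)
  ddf p := tauM_isDDF (S.ddf p.1) (S'.ddf p.2)
  proper p := (tauM_isDDF (S.ddf p.1) (S'.ddf p.2)).isProper
  nu_eq_iff p := by
    rw [tauM_eq_H0_iff (S.ddf p.1) (S'.ddf p.2), S.nu_eq_iff, S'.nu_eq_iff, Prod.ext_iff]
    rfl
  nu_add p q t := (tauM_tauM_le_tauM_tauM (S.ddf p.1).le_one (S'.ddf p.2).le_one t).trans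
    (tauM_le_tauM (S.ddf _).le_one (S.nu_add p.1 q.1) (S'.nu_add p.2 q.2) t)
  nu_smul a ha p t := by
    have hS : S.nu (a • p.1) = fun s => S.nu p.1 (s / |a|) := funext (S.nu_smul a ha p.1)
    have hS' : S'.nu (a • p.2) = fun s => S'.nu p.2 (s / |a|) := funext (S'.nu_smul a ha p.2)
    simp only [Prod.smul_fst, Prod.smul_snd, hS, hS']
    exact tauM_comp_div (abs_pos.2 ha) t

theorem pnorm_prod (S : SPN V) (S' : SPN W) (x : V) (y : W) {w : ℝ} (hw : w ∈ Ioo (0 : ℝ) 1) :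
    pnorm (S.prod S') (x, y) w = pnorm S x w + pnorm S' y w :=
  sSup_tauM_lt (S.ddf x) (S'.ddf y) hw.1 hw.2

end SPN

/-- Example 3.14: the product of two Šerstnev PN-spaces is a Šerstnev PN-space under
`θ_{(x,y)} = τ_M(ν_x, μ_y)`, with `‖(x,y)‖_w = ‖x‖_{V,w} + ‖y‖_{W,w}`. -/
theorem spn_prod {V W : Type*} [AddCommGroup V] [Module ℝ V] [AddCommGroup W] [Module ℝ W]
    (S : SPN V) (S' : SPN W) :
    ∃ Θ : SPN (V × W),
      (∀ (x : V) (y : W), Θ.nu (x, y) = tauM (S.nu x) (S'.nu y)) ∧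
      (∀ (x : V) (y : W), ∀ w ∈ Set.Ioo (0:ℝ) 1,
        pnorm Θ (x, y) w = pnorm S x w + pnorm S' y w) :=
  ⟨S.prod S', fun _ _ => rfl, fun x y _ hw => S.pnorm_prod S' x y hw⟩
end
end

section
/- Open Mapping Theorem for PN-spaces: Let (V, ν) and (W, μ) be Šerstnev PN-spaces under τ_M that are complete in their strong topologies, and let T : V → W be a continuous surjective linear operator. Then T is an open map with respect to the strong topologies. -/
open Filter Topology Set

noncomputable section

/-!
The Ky Fan functional `‖x‖ = inf {t > 0 | 1 - t < ν_x t}` is a translation-invariant F-norm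
on a Šerstnev PN-space: its metric induces the strong topology, scalar multiplication is
continuous for it, and strong completeness is completeness of this metric. The theorem is
therefore the open mapping theorem for F-spaces, proved by the classical Baire argument:
countably many dilates of `closure (T '' ball 0 ε)` cover `W`, so this closure is a
neighbourhood of `0`, and successive approximation in the complete space `V` removes the closure.
-/

open Metric Pointwise

theorem AddMonoidHom.exists_seq_sub_map_sum_mem {V W : Type*} [AddCommGroup V] [AddCommGroup W]
    (f : V →+ W) {B : ℕ → Set V} {C : ℕ → Set W}
    (hstep : ∀ k, ∀ z ∈ C k, ∃ x ∈ B k, z - f x ∈ C (k + 1)) {y : W} (hy : y ∈ C 0) :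
    ∃ x : ℕ → V, (∀ k, x k ∈ B k) ∧ ∀ n, y - f (∑ i ∈ Finset.range n, x i) ∈ C n := by
  choose! u hu hsub using hstep
  let z : ℕ → W := fun k => Nat.rec y (fun k zk => zk - f (u k zk)) k
  have hz : ∀ k, z k ∈ C k := fun k => by
    induction k with
    | zero => exact hy
    | succ k ih => exact hsub k _ ih
  refine ⟨fun k => u k (z k), fun k => hu k _ (hz k), fun n => ?_⟩
  suffices y - f (∑ i ∈ Finset.range n, u i (z i)) = z n from this ▸ hz n
  induction n with
  | zero => simp [z]
  | succ n ih =>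
    rw [Finset.sum_range_succ, map_add, ← sub_sub, ih]

theorem exists_sub_map_mem_of_mem_closure {X W : Type*} [TopologicalSpace W] [AddGroup W]
    [IsTopologicalAddGroup W] {f : X → W} {s : Set X} {t : Set W} {z : W}
    (hz : z ∈ closure (f '' s)) (ht : t ∈ 𝓝 0) : ∃ x ∈ s, z - f x ∈ t := by
  have : (z - ·) ⁻¹' t ∈ 𝓝 z :=
    ((continuous_const.sub continuous_id).tendsto' z 0 (sub_self z)) ht
  obtain ⟨_, hmem, x, hx, rfl⟩ := mem_closure_iff_nhds.1 hz _ this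
  exact ⟨x, hx, hmem⟩

section OpenMapping

variable {V W : Type*} [SeminormedAddCommGroup V] [NormedAddCommGroup W]

theorem AddMonoidHom.image_ball_mem_nhds_of_closure [CompleteSpace V] (f : V →+ W)
    (hf : Continuous f) (hcl : ∀ ε > 0, closure (f '' ball 0 ε) ∈ 𝓝 0) {r : ℝ} (hr : 0 < r) :
    f '' ball 0 r ∈ 𝓝 0 := by
  have hδ : ∀ k : ℕ, ∃ δ > 0, δ ≤ r / 4 * (1 / 2) ^ k ∧ f '' ball 0 δ ⊆ ball 0 ((1 / 2) ^ k) := by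
    intro k
    obtain ⟨δ, hδ, hfδ⟩ :=
      Metric.continuousAt_iff.1 hf.continuousAt _ (by positivity : (0 : ℝ) < (1 / 2) ^ k)
    refine ⟨min δ (r / 4 * (1 / 2) ^ k), by positivity, min_le_right _ _, ?_⟩
    rintro _ ⟨x, hx, rfl⟩
    simpa using hfδ (lt_of_lt_of_le (mem_ball.1 hx) (min_le_left _ _))
  choose δ hδpos hδr hδf using hδ
  refine mem_of_superset (hcl _ (hδpos 0)) fun y hy => ?_
  obtain ⟨x, hxδ, hxy⟩ := f.exists_seq_sub_map_sum_mem (B := fun k => ball 0 (δ k))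
      (C := fun k => closure (f '' ball 0 (δ k)))
    (fun k z hz => exists_sub_map_mem_of_mem_closure hz (hcl _ (hδpos (k + 1)))) hy
  have hxr : ∀ k, ‖x k‖ ≤ r / 4 * (1 / 2) ^ k := fun k =>
    (mem_ball_zero_iff.1 (hxδ k)).le.trans (hδr k)
  have hgeom : HasSum (fun k : ℕ => r / 4 * (1 / 2) ^ k) (r / 2) := by
    simpa only [show r / 4 * 2 = r / 2 by ring] using hasSum_geometric_two.mul_left (r / 4)
  have hsum : Summable x := (hgeom.summable).of_norm_bounded hxr
  refine ⟨∑' k, x k,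
    mem_ball_zero_iff.2 ((tsum_of_norm_bounded hgeom hxr).trans_lt (by linarith)), ?_⟩
  have hsmall : ∀ n, ‖y - f (∑ i ∈ Finset.range n, x i)‖ ≤ (1 / 2) ^ n := fun n =>
    mem_closedBall_zero_iff.1 (closure_minimal ((hδf n).trans ball_subset_closedBall)
      isClosed_closedBall (hxy n))
  have hlim : Tendsto (fun n => y - f (∑ i ∈ Finset.range n, x i)) atTop (𝓝 (y - f (∑' k, x k))) :=
    tendsto_const_nhds.sub ((hf.tendsto _).comp hsum.hasSum.tendsto_sum_nat)
  have hzero : Tendsto (fun n => y - f (∑ i ∈ Finset.range n, x i)) atTop (𝓝 0) :=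
    squeeze_zero_norm hsmall (tendsto_pow_atTop_nhds_zero_of_lt_one (by norm_num) (by norm_num))
  exact (sub_eq_zero.1 (tendsto_nhds_unique hlim hzero)).symm

variable [Module ℝ V] [Module ℝ W]

theorem LinearMap.closure_image_ball_mem_nhds [ContinuousSMul ℝ V] [ContinuousConstSMul ℝ W]
    [BaireSpace W] (T : V →ₗ[ℝ] W) (hT : Function.Surjective T) {ε : ℝ} (hε : 0 < ε) :
    closure (T '' ball 0 ε) ∈ 𝓝 0 := by
  set A := closure (T '' ball 0 (ε / 2))
  have hcover : ⋃ n : ℕ, ((n : ℝ) + 1) • A = univ := by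
    refine eq_univ_of_forall fun y => mem_iUnion.2 ?_
    obtain ⟨x, rfl⟩ := hT y
    have hsmall : ∀ᶠ n : ℕ in atTop, (1 / ((n : ℝ) + 1)) • x ∈ ball 0 (ε / 2) := by
      refine tendsto_one_div_add_atTop_nhds_zero_nat.smul_const x ?_
      simpa using ball_mem_nhds (0 : V) (half_pos hε)
    obtain ⟨n, hn⟩ := hsmall.exists
    refine ⟨n, ?_⟩
    have hne : (n : ℝ) + 1 ≠ 0 := by positivity
    simpa [map_smul, smul_smul, hne] using
      smul_mem_smul_set (a := (n : ℝ) + 1) (subset_closure (mem_image_of_mem T hn))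
  obtain ⟨n, hn⟩ := nonempty_interior_of_iUnion_of_closed
    (fun n : ℕ => isClosed_closure.smul_of_ne_zero (by positivity : (n : ℝ) + 1 ≠ 0)) hcover
  obtain ⟨y, hy⟩ : (interior A).Nonempty := by
    rwa [interior_smul₀ (by positivity : (n : ℝ) + 1 ≠ 0), smul_set_nonempty] at hn
  refine mem_of_superset
    ((isOpen_interior.sub_right (t := {y})).mem_nhds ⟨y, hy, y, rfl, sub_self y⟩) ?_
  rintro _ ⟨a, ha, _, rfl, rfl⟩
  refine map_mem_closure₂ continuous_sub (interior_subset ha) (interior_subset hy) ?_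
  rintro _ ⟨u, hu, rfl⟩ _ ⟨v, hv, rfl⟩
  refine ⟨u - v, mem_ball_zero_iff.2 ?_, map_sub T u v⟩
  calc ‖u - v‖ ≤ ‖u‖ + ‖v‖ := norm_sub_le u v
    _ < ε / 2 + ε / 2 := add_lt_add (mem_ball_zero_iff.1 hu) (mem_ball_zero_iff.1 hv)
    _ = ε := add_halves ε

theorem LinearMap.isOpenMap_of_surjective [CompleteSpace V] [ContinuousSMul ℝ V]
    [ContinuousConstSMul ℝ W] [BaireSpace W] (T : V →ₗ[ℝ] W) (hTc : Continuous T)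
    (hT : Function.Surjective T) : IsOpenMap T := by
  refine IsTopologicalAddGroup.isOpenMap_iff_nhds_zero.2 (le_map fun s hs => ?_)
  obtain ⟨r, hr, hrs⟩ := Metric.mem_nhds_iff.1 hs
  exact mem_of_superset (T.toAddMonoidHom.image_ball_mem_nhds_of_closure hTc
    (fun ε hε => T.closure_image_ball_mem_nhds hT hε) hr) (image_mono hrs)

end OpenMapping

namespace SPN

variable {V : Type*} [AddCommGroup V] [Module ℝ V] (S : SPN V)

theorem nu_mono (x : V) : Monotone (S.nu x) := (S.ddf x).1

theorem nu_nonneg (x : V) (t : ℝ) : 0 ≤ S.nu x t := ((S.ddf x).2.1 t).1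

theorem nu_le_one (x : V) (t : ℝ) : S.nu x t ≤ 1 := ((S.ddf x).2.1 t).2

theorem nu_apply_zero (x : V) : S.nu x 0 = 0 := (S.ddf x).2.2.2.1

theorem nu_zero_apply_of_pos {t : ℝ} (ht : 0 < t) : S.nu 0 t = 1 := by
  rw [(S.nu_eq_iff 0).2 rfl, H0, if_pos ht]

theorem nu_neg (x : V) : S.nu (-x) = S.nu x := by
  funext t
  simpa using S.nu_smul (-1) (by norm_num) x t

theorem min_le_nu_add (x y : V) (s t : ℝ) :
    min (S.nu x s) (S.nu y t) ≤ S.nu (x + y) (s + t) := by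
  have hbdd : BddAbove (range fun u => min (S.nu x u) (S.nu y (s + t - u))) :=
    ⟨1, by rintro _ ⟨u, rfl⟩; exact (min_le_left _ _).trans (S.nu_le_one x u)⟩
  calc min (S.nu x s) (S.nu y t) = min (S.nu x s) (S.nu y (s + t - s)) := by
        rw [add_sub_cancel_left]
    _ ≤ tauM (S.nu x) (S.nu y) (s + t) := le_ciSup hbdd s
    _ ≤ S.nu (x + y) (s + t) := S.nu_add x y (s + t)

theorem nu_le_nu_smul {a c t : ℝ} (ha : |a| ≤ c) (ht : 0 < t) (x : V) :
    S.nu x (t / c) ≤ S.nu (a • x) t := by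
  rcases eq_or_ne a 0 with rfl | ha0
  · rw [zero_smul, S.nu_zero_apply_of_pos ht]
    exact S.nu_le_one x _
  · rw [S.nu_smul a ha0]
    exact S.nu_mono x (div_le_div_of_nonneg_left ht.le (abs_pos.2 ha0) ha)

theorem pnorm_le {x : V} {w r : ℝ} (hw : 0 < w) (h : w ≤ S.nu x r) : pnorm S x w ≤ r :=
  csSup_le ⟨0, by simpa [S.nu_apply_zero] using hw⟩ fun t ht =>
    le_of_not_gt fun hrt => (h.trans (S.nu_mono x hrt.le)).not_gt ht

theorem le_nu_of_pnorm_lt {x : V} {w r : ℝ} (hw : w < 1) (h : pnorm S x w < r) :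
    w ≤ S.nu x r := by
  obtain ⟨N, hN⟩ := eventually_atTop.1 ((S.proper x).eventually (eventually_gt_nhds hw))
  have hbdd : BddAbove {t | S.nu x t < w} :=
    ⟨N, fun t ht => le_of_not_gt fun hNt => (hN t hNt.le).not_gt ht⟩
  exact le_of_not_gt fun hr => h.not_ge (le_csSup hbdd hr)

theorem pnorm_add_le (x y : V) {w : ℝ} (hw : w ∈ Ioo (0 : ℝ) 1) :
    pnorm S (x + y) w ≤ pnorm S x w + pnorm S y w := by
  refine le_of_forall_gt_imp_ge_of_dense fun r hr => ?_
  set d := r - (pnorm S x w + pnorm S y w)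
  have hx := S.le_nu_of_pnorm_lt hw.2 (by linarith : pnorm S x w < pnorm S x w + d / 2)
  have hy := S.le_nu_of_pnorm_lt hw.2 (by linarith : pnorm S y w < pnorm S y w + d / 2)
  refine S.pnorm_le hw.1 ((le_min hx hy).trans ((S.min_le_nu_add x y _ _).trans_eq ?_))
  congr 1
  ring

def kyFan (x : V) : ℝ := sInf {t | 0 < t ∧ 1 - t < S.nu x t}

theorem kyFan_le {x : V} {t : ℝ} (ht : 0 < t) (h : 1 - t < S.nu x t) : S.kyFan x ≤ t :=
  csInf_le ⟨0, fun _ hs => hs.1.le⟩ ⟨ht, h⟩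

theorem kyFan_set_nonempty (x : V) : {t | 0 < t ∧ 1 - t < S.nu x t}.Nonempty :=
  ⟨2, two_pos, by linarith [S.nu_nonneg x 2]⟩

theorem kyFan_nonneg (x : V) : 0 ≤ S.kyFan x :=
  le_csInf (S.kyFan_set_nonempty x) fun _ hs => hs.1.le

theorem lt_nu_of_kyFan_lt {x : V} {t : ℝ} (h : S.kyFan x < t) : 1 - t < S.nu x t := by
  obtain ⟨s, hs, hst⟩ := exists_lt_of_csInf_lt (S.kyFan_set_nonempty x) h
  linarith [hs.2, S.nu_mono x hst.le]

theorem kyFan_le_of_forall {x : V} {a : ℝ} (ha : 0 ≤ a) (h : ∀ t, a < t → 1 - t < S.nu x t) :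
    S.kyFan x ≤ a :=
  le_of_forall_gt_imp_ge_of_dense fun t ht => S.kyFan_le (ha.trans_lt ht) (h t ht)

theorem kyFan_zero : S.kyFan 0 = 0 :=
  (S.kyFan_le_of_forall le_rfl fun t ht => by
    rw [S.nu_zero_apply_of_pos ht]; linarith).antisymm (S.kyFan_nonneg 0)

theorem eq_zero_of_kyFan_eq_zero {x : V} (h : S.kyFan x = 0) : x = 0 := by
  refine (S.nu_eq_iff x).1 (funext fun t => ?_)
  rcases le_or_gt t 0 with ht | ht
  · rw [H0, if_neg ht.not_gt]
    exact ((S.nu_mono x ht).trans_eq (S.nu_apply_zero x)).antisymm (S.nu_nonneg x t)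
  · rw [H0, if_pos ht]
    refine (S.nu_le_one x t).antisymm (le_of_forall_pos_le_add fun ε hε => ?_)
    have hmin : S.kyFan x < min t ε := h ▸ lt_min ht hε
    linarith [S.lt_nu_of_kyFan_lt hmin, S.nu_mono x (min_le_left t ε), min_le_right t ε]

theorem kyFan_neg (x : V) : S.kyFan (-x) = S.kyFan x := by
  simp only [kyFan, nu_neg]

theorem kyFan_add_le (x y : V) : S.kyFan (x + y) ≤ S.kyFan x + S.kyFan y := by
  refine S.kyFan_le_of_forall (add_nonneg (S.kyFan_nonneg x) (S.kyFan_nonneg y)) fun r hr => ?_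
  set d := r - (S.kyFan x + S.kyFan y)
  have hx := S.lt_nu_of_kyFan_lt (by linarith : S.kyFan x < S.kyFan x + d / 2)
  have hy := S.lt_nu_of_kyFan_lt (by linarith : S.kyFan y < S.kyFan y + d / 2)
  have hsum := S.min_le_nu_add x y (S.kyFan x + d / 2) (S.kyFan y + d / 2)
  rw [show S.kyFan x + d / 2 + (S.kyFan y + d / 2) = r by ring] at hsum
  refine lt_of_lt_of_le (lt_min ?_ ?_) hsum <;>
    linarith [S.kyFan_nonneg x, S.kyFan_nonneg y]

theorem kyFan_smul_le {a c : ℝ} (ha : |a| ≤ c) (hc : 1 ≤ c) (x : V) :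
    S.kyFan (a • x) ≤ c * S.kyFan x := by
  have hc0 : 0 < c := one_pos.trans_le hc
  refine S.kyFan_le_of_forall (mul_nonneg hc0.le (S.kyFan_nonneg x)) fun t ht => ?_
  have hlt : S.kyFan x < t / c := by rwa [lt_div_iff₀' hc0]
  have hpos : 0 < t := (mul_nonneg hc0.le (S.kyFan_nonneg x)).trans_lt ht
  have htc : t / c ≤ t := div_le_self hpos.le hc
  linarith [S.lt_nu_of_kyFan_lt hlt, S.nu_le_nu_smul ha hpos x]

theorem tendsto_kyFan_smul_zero (x : V) :
    Tendsto (fun a : ℝ => S.kyFan (a • x)) (𝓝 0) (𝓝 0) := by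
  refine tendsto_order.2 ⟨fun b hb => Eventually.of_forall fun a => hb.trans_le
    (S.kyFan_nonneg _), fun ε hε => ?_⟩
  obtain ⟨s, hs⟩ := eventually_atTop.1
    ((S.proper x).eventually (eventually_gt_nhds (by linarith : 1 - ε / 2 < 1)))
  set s' := max s 1
  have hs' : 0 < s' := one_pos.trans_le (le_max_right s 1)
  have hc : 0 < ε / 2 / s' := by positivity
  filter_upwards [Metric.ball_mem_nhds (0 : ℝ) hc] with a ha
  have ha' : |a| ≤ ε / 2 / s' := by simpa [Real.dist_eq] using (Metric.mem_ball.1 ha).le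
  have hnu := S.nu_le_nu_smul ha' (half_pos hε) x
  rw [div_div_cancel₀ (half_pos hε).ne'] at hnu
  have hνs := hs s' (le_max_left s 1)
  linarith [S.kyFan_le (half_pos hε) (by linarith : 1 - ε / 2 < S.nu (a • x) (ε / 2))]

def kyFanNorm : AddGroupNorm V where
  toFun := S.kyFan
  map_zero' := S.kyFan_zero
  add_le' := S.kyFan_add_le
  neg' := S.kyFan_neg
  eq_zero_of_map_eq_zero' _ := S.eq_zero_of_kyFan_eq_zero

abbrev toNormedAddCommGroup : NormedAddCommGroup V := S.kyFanNorm.toNormedAddCommGroup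

theorem dist_eq_kyFan (x y : V) : letI := S.toNormedAddCommGroup; dist x y = S.kyFan (x - y) := by
  let := S.toNormedAddCommGroup
  exact dist_eq_norm x y

theorem norm_eq_kyFan (x : V) : letI := S.toNormedAddCommGroup; ‖x‖ = S.kyFan x :=
  rfl

theorem continuousSMul : letI := S.toNormedAddCommGroup; ContinuousSMul ℝ V := by
  let := S.toNormedAddCommGroup
  refine .of_nhds_zero (tendsto_zero_iff_norm_tendsto_zero.2 ?_)
    (fun x => tendsto_zero_iff_norm_tendsto_zero.2 (S.tendsto_kyFan_smul_zero x))
    fun a => tendsto_zero_iff_norm_tendsto_zero.2 ?_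
  · refine squeeze_zero' (Eventually.of_forall fun _ => norm_nonneg _) ?_
      (tendsto_norm_zero.comp tendsto_snd)
    filter_upwards [prod_mem_prod (Metric.closedBall_mem_nhds (0 : ℝ) one_pos) univ_mem]
      with p hp
    simpa [norm_eq_kyFan] using S.kyFan_smul_le (c := 1) (by simpa using hp.1) le_rfl p.2
  · refine squeeze_zero (fun _ => norm_nonneg _) (fun x => S.kyFan_smul_le (le_max_right 1 |a|)
      (le_max_left 1 |a|) x) ?_
    simpa [norm_eq_kyFan] using (tendsto_norm_zero (E := V)).const_mul (max 1 |a|)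

theorem pnorm_le_of_kyFan_lt {x : V} {w s : ℝ} (hw : 0 < w) (hs : s ≤ 1 - w)
    (h : S.kyFan x < s) : pnorm S x w ≤ s :=
  S.pnorm_le hw (by linarith [S.lt_nu_of_kyFan_lt h])

theorem kyFan_le_of_pnorm_lt {x : V} {t : ℝ} (ht : 0 < t) (h : pnorm S x (1 - t) < t) :
    S.kyFan x ≤ t :=
  S.kyFan_le_of_forall ht.le fun _ hs => by
    linarith [S.le_nu_of_pnorm_lt (by linarith) h, S.nu_mono x hs.le]

theorem strongTop_eq :
    letI := S.toNormedAddCommGroup; strongTop S = UniformSpace.toTopologicalSpace := by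
  let := S.toNormedAddCommGroup
  refine le_antisymm (le_of_nhds_le_nhds fun x => Metric.nhds_basis_ball.ge_iff.2 fun ε hε => ?_)
    (le_generateFrom ?_)
  · set t := min (ε / 2) (1 / 2)
    have ht : 0 < t := by positivity
    have ht1 : t < 1 := (min_le_right _ _).trans_lt (by norm_num)
    have hopen : IsOpen[strongTop S] {y | pnorm S (y - x) (1 - t) < t} :=
      TopologicalSpace.isOpen_generateFrom_of_mem ⟨x, 1 - t, t, ⟨by linarith, by linarith⟩, ht, rfl⟩
    refine mem_of_superset (@IsOpen.mem_nhds V (strongTop S) _ _ hopen ?_) fun y hy => ?_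
    · have hx : S.kyFan (x - x) < t / 2 := by rw [sub_self, S.kyFan_zero]; exact half_pos ht
      exact (S.pnorm_le_of_kyFan_lt (w := 1 - t) (by linarith) (by linarith) hx).trans_lt
        (half_lt_self ht)
    · rw [Metric.mem_ball, S.dist_eq_kyFan]
      linarith [S.kyFan_le_of_pnorm_lt ht hy, min_le_left (ε / 2) (1 / 2)]
  · rintro _ ⟨x, w, r, hw, hr, rfl⟩
    refine Metric.isOpen_iff.2 fun y (hy : pnorm S (y - x) w < r) => ?_
    refine ⟨min ((r - pnorm S (y - x) w) / 2) (1 - w), lt_min (by linarith) (by linarith [hw.2]),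
      fun z hz => ?_⟩
    rw [Metric.mem_ball, S.dist_eq_kyFan] at hz
    have hzy := S.pnorm_le_of_kyFan_lt hw.1 (min_le_right _ _) hz
    have htri := S.pnorm_add_le (z - y) (y - x) hw
    rw [sub_add_sub_cancel] at htri
    show pnorm S (z - x) w < r
    linarith [min_le_left ((r - pnorm S (y - x) w) / 2) (1 - w)]

theorem completeSpace (h : StrongComplete S) : letI := S.toNormedAddCommGroup; CompleteSpace V := by
  let := S.toNormedAddCommGroup
  refine Metric.complete_of_cauchySeq_tendsto fun u hu => ?_
  have hcauchy : StrongCauchy S u := fun t ht => by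
    obtain ⟨N, hN⟩ := Metric.cauchySeq_iff.1 hu t ht
    exact ⟨N, fun m hm n hn => S.lt_nu_of_kyFan_lt (S.dist_eq_kyFan _ _ ▸ hN n hn m hm)⟩
  obtain ⟨p, hp⟩ := h u hcauchy
  refine ⟨p, Metric.tendsto_atTop.2 fun ε hε => ?_⟩
  obtain ⟨N, hN⟩ := hp (ε / 2) (half_pos hε)
  refine ⟨N, fun n hn => S.dist_eq_kyFan _ _ ▸ ?_⟩
  exact (S.kyFan_le (half_pos hε) (hN n hn)).trans_lt (half_lt_self hε)

end SPN

/-- Open Mapping Theorem for PN-spaces: a continuous surjective linear operator between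
strongly complete Šerstnev PN-spaces is open for the strong topologies. -/
theorem spn_open_mapping {V W : Type*} [AddCommGroup V] [Module ℝ V]
    [AddCommGroup W] [Module ℝ W]
    (S : SPN V) (S' : SPN W) (hV : StrongComplete S) (hW : StrongComplete S')
    (T : V →ₗ[ℝ] W)
    (hTc : @Continuous V W (strongTop S) (strongTop S') T)
    (hTs : Function.Surjective T) :
    ∀ U : Set V, @IsOpen V (strongTop S) U → @IsOpen W (strongTop S') (T '' U) := by
  intro U hU
  let := S.toNormedAddCommGroup
  let := S'.toNormedAddCommGroup
  have := S.completeSpace hV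
  have := S'.completeSpace hW
  have := S.continuousSMul
  have := S'.continuousSMul
  rw [S.strongTop_eq] at hTc hU
  rw [S'.strongTop_eq] at hTc ⊢
  exact T.isOpenMap_of_surjective hTc hTs U hU
end
end
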